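/- Let f be a meromorphic function in the Yosida class N₁. Then there exists R₀ < ∞ such that every disc B(w, R₀), w ∈ ℂ, contains at least one zero of f and at least one pole of f. -/

import Mathlib

/-!
If arbitrarily large discs avoided the poles of `f`, normality would give a limit `g` of
translates of `f` which is a spherical limit of holomorphic functions. By Hurwitz's theorem
applied to the reciprocals, such a limit is either identically `∞` or entire. The first case is
excluded by the definition of `N₁`; in the second, `g` is nonconstant, hence unbounded by
Liouville's theorem. Translating `g` to points where it is large and passing to a further
limit (a diagonal argument) gives a limit of translates of `f` that is `∞` at `0`, hence
identically `∞`, which is again excluded. Zeros are poles of `1 / f`, which is also in `N₁`.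
-/

open Complex Metric OnePoint Filter

/-- Finite part of a point of the Riemann sphere. -/
noncomputable def finPart (x : OnePoint ℂ) : ℂ := Option.elim x 0 id

/-- Inversion `z ↦ 1/z` on the Riemann sphere. -/
noncomputable def oinv (x : OnePoint ℂ) : OnePoint ℂ :=
  Option.elim x (((0 : ℂ) : OnePoint ℂ))
    (fun z => if z = 0 then (∞ : OnePoint ℂ) else (((z⁻¹ : ℂ)) : OnePoint ℂ))

/-- The spherical (chordal) metric on the Riemann sphere. -/
noncomputable def sphDist (x y : OnePoint ℂ) : ℝ :=
  Option.elim x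
    (Option.elim y 0 (fun w => 2 / Real.sqrt (1 + ‖w‖ ^ 2)))
    (fun z => Option.elim y (2 / Real.sqrt (1 + ‖z‖ ^ 2))
      (fun w => 2 * dist z w / (Real.sqrt (1 + ‖z‖ ^ 2) * Real.sqrt (1 + ‖w‖ ^ 2))))

/-- A map to the Riemann sphere is meromorphic: at every point either the map is finite
and analytic, or it takes the value `∞` and its reciprocal is analytic there. -/
def MeroSphere (f : ℂ → OnePoint ℂ) : Prop :=
  ∀ z : ℂ, (f z ≠ ∞ ∧ AnalyticAt ℂ (fun w => finPart (f w)) z)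
    ∨ (f z = ∞ ∧ AnalyticAt ℂ (fun w => finPart (oinv (f w))) z)

/-- The translates `f (· + h n)` converge to `g` uniformly on compacta in the spherical
metric. -/
def UnifCompLim (f : ℂ → OnePoint ℂ) (h : ℕ → ℂ) (g : ℂ → OnePoint ℂ) : Prop :=
  ∀ K : Set ℂ, IsCompact K → ∀ ε > (0 : ℝ), ∃ N : ℕ, ∀ n ≥ N, ∀ z ∈ K,
    sphDist (f (z + h n)) (g z) < ε

/-- Yosida's class `N₁`: a meromorphic map to the Riemann sphere whose family of translates
is normal (uniformly on compacta, spherical metric) and has no constant limit function. -/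
def YosidaN1 (f : ℂ → OnePoint ℂ) : Prop :=
  MeroSphere f ∧
  (∀ h : ℕ → ℂ, ∃ φ : ℕ → ℕ, StrictMono φ ∧ ∃ g : ℂ → OnePoint ℂ, UnifCompLim f (h ∘ φ) g) ∧
  (∀ h : ℕ → ℂ, ∀ g : ℂ → OnePoint ℂ, UnifCompLim f h g → ¬ ∃ c : OnePoint ℂ, g = fun _ => c)

open Classical in
/-- Multiplicity of a zero or pole of a meromorphic map to the sphere. -/
noncomputable def multAt (f : ℂ → OnePoint ℂ) (z : ℂ) : ℕ∞ :=
  if f z = (∞ : OnePoint ℂ) then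
    (if h : AnalyticAt ℂ (fun w => finPart (oinv (f w))) z then analyticOrderAt (fun w => finPart (oinv (f w))) z else 0)
  else
    (if h : AnalyticAt ℂ (fun w => finPart (f w)) z then analyticOrderAt (fun w => finPart (f w)) z else 0)

open Topology

/-! ### The chordal metric -/

noncomputable def sphWeight (z : ℂ) : ℝ := Real.sqrt (1 + ‖z‖ ^ 2)

lemma sphWeight_pos (z : ℂ) : 0 < sphWeight z := Real.sqrt_pos.mpr (by positivity)

lemma sphWeight_sq (z : ℂ) : sphWeight z ^ 2 = 1 + ‖z‖ ^ 2 := Real.sq_sqrt (by positivity)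

@[simp] lemma sphWeight_zero : sphWeight 0 = 1 := by simp [sphWeight]

lemma one_le_sphWeight (z : ℂ) : 1 ≤ sphWeight z :=
  Real.one_le_sqrt.mpr (by nlinarith [sq_nonneg ‖z‖])

lemma norm_le_sphWeight (z : ℂ) : ‖z‖ ≤ sphWeight z :=
  Real.le_sqrt_of_sq_le (by linarith)

lemma sphWeight_le_one_add_norm (z : ℂ) : sphWeight z ≤ 1 + ‖z‖ :=
  Real.sqrt_le_iff.mpr ⟨by positivity, by nlinarith [norm_nonneg z]⟩

lemma sphWeight_le_sphWeight_add_dist (b c : ℂ) : sphWeight b ≤ sphWeight c + dist b c := by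
  have hbc : ‖b‖ ≤ ‖c‖ + dist b c := by
    rw [dist_eq_norm]; linarith [norm_sub_norm_le b c]
  refine Real.sqrt_le_iff.mpr ⟨by linarith [sphWeight_pos c, dist_nonneg (x := b) (y := c)], ?_⟩
  nlinarith [sphWeight_sq c, norm_le_sphWeight c, norm_nonneg b, norm_nonneg c,
    dist_nonneg (x := b) (y := c)]

lemma sphWeight_inv {z : ℂ} (hz : z ≠ 0) : sphWeight z⁻¹ = sphWeight z / ‖z‖ := by
  have hn : 0 < ‖z‖ := norm_pos_iff.mpr hz
  rw [sphWeight, sphWeight, norm_inv, ← Real.sqrt_sq hn.le, ← Real.sqrt_div' _ (sq_nonneg _),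
    Real.sqrt_sq hn.le]
  congr 1
  field_simp
  ring

@[simp] lemma sphDist_coe_coe (z w : ℂ) :
    sphDist z w = 2 * dist z w / (sphWeight z * sphWeight w) := rfl
@[simp] lemma sphDist_coe_infty (z : ℂ) : sphDist z ∞ = 2 / sphWeight z := rfl
@[simp] lemma sphDist_infty_coe (z : ℂ) : sphDist ∞ z = 2 / sphWeight z := rfl
@[simp] lemma sphDist_infty_infty : sphDist ∞ ∞ = 0 := rfl

lemma sphDist_nonneg (x y : OnePoint ℂ) : 0 ≤ sphDist x y := by
  induction x using OnePoint.rec <;> induction y using OnePoint.rec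
  · exact le_rfl
  · exact (div_pos two_pos (sphWeight_pos _)).le
  · exact (div_pos two_pos (sphWeight_pos _)).le
  · exact div_nonneg (by positivity) (mul_pos (sphWeight_pos _) (sphWeight_pos _)).le

lemma sphDist_comm (x y : OnePoint ℂ) : sphDist x y = sphDist y x := by
  induction x using OnePoint.rec <;> induction y using OnePoint.rec <;>
    simp [dist_comm, mul_comm]

lemma eq_of_sphDist_le_zero {x y : OnePoint ℂ} (h : sphDist x y ≤ 0) : x = y := by
  induction x using OnePoint.rec <;> induction y using OnePoint.rec
  · rfl
  · exact absurd h (not_le.mpr (div_pos two_pos (sphWeight_pos _)))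
  · exact absurd h (not_le.mpr (div_pos two_pos (sphWeight_pos _)))
  · rename_i z w
    rw [sphDist_coe_coe, div_le_iff₀ (mul_pos (sphWeight_pos z) (sphWeight_pos w))] at h
    rw [dist_le_zero.mp (show dist z w ≤ 0 by linarith)]

lemma sphDist_pos {x y : OnePoint ℂ} (h : x ≠ y) : 0 < sphDist x y :=
  lt_of_not_ge (mt eq_of_sphDist_le_zero h)

lemma norm_one_add_conj_mul_le (a b : ℂ) :
    ‖1 + starRingEnd ℂ a * b‖ ≤ sphWeight a * sphWeight b := by
  have h1 : ‖1 + starRingEnd ℂ a * b‖ ≤ 1 + ‖a‖ * ‖b‖ :=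
    (norm_add_le _ _).trans (by rw [norm_one, norm_mul, RCLike.norm_conj])
  have h2 : (1 + ‖a‖ * ‖b‖) ^ 2 ≤ (sphWeight a * sphWeight b) ^ 2 := by
    rw [mul_pow, sphWeight_sq, sphWeight_sq]
    nlinarith [sq_nonneg (‖a‖ - ‖b‖)]
  exact h1.trans ((pow_le_pow_iff_left₀ (by positivity)
    (mul_pos (sphWeight_pos a) (sphWeight_pos b)).le two_ne_zero).mp h2)

/-- From the identity `(z - w)(1 + ū u) = (z - u)(1 + ū w) + (u - w)(1 + ū z)`. -/
lemma dist_mul_sphWeight_le (z u w : ℂ) :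
    dist z w * sphWeight u ≤ dist z u * sphWeight w + dist u w * sphWeight z := by
  have hid : (z - w) * (1 + starRingEnd ℂ u * u)
      = (z - u) * (1 + starRingEnd ℂ u * w) + (u - w) * (1 + starRingEnd ℂ u * z) := by ring
  have hu : (1 : ℂ) + starRingEnd ℂ u * u = ((sphWeight u ^ 2 : ℝ) : ℂ) := by
    rw [sphWeight_sq, mul_comm, Complex.mul_conj, Complex.sq_norm]; push_cast; ring
  have key : ‖z - w‖ * sphWeight u ^ 2
      ≤ ‖z - u‖ * (sphWeight u * sphWeight w) + ‖u - w‖ * (sphWeight u * sphWeight z) := by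
    calc ‖z - w‖ * sphWeight u ^ 2 = ‖(z - w) * (1 + starRingEnd ℂ u * u)‖ := by
          rw [norm_mul, hu, Complex.norm_real, Real.norm_of_nonneg (by positivity)]
      _ ≤ ‖(z - u) * (1 + starRingEnd ℂ u * w)‖ + ‖(u - w) * (1 + starRingEnd ℂ u * z)‖ := by
          rw [hid]; exact norm_add_le _ _
      _ ≤ _ := by
          rw [norm_mul, norm_mul]
          gcongr
          exacts [norm_one_add_conj_mul_le u w, norm_one_add_conj_mul_le u z]
  rw [dist_eq_norm, dist_eq_norm, dist_eq_norm]
  nlinarith [sphWeight_pos u]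

lemma sphDist_infty_triangle (b c : ℂ) : sphDist ∞ c ≤ sphDist ∞ b + sphDist b c := by
  have hb := sphWeight_pos b; have hc := sphWeight_pos c
  simp only [sphDist_infty_coe, sphDist_coe_coe]
  rw [div_add_div _ _ hb.ne' (by positivity), div_le_div_iff₀ hc (by positivity)]
  nlinarith [mul_le_mul_of_nonneg_left (sphWeight_le_sphWeight_add_dist b c)
    (by positivity : (0 : ℝ) ≤ 2 * sphWeight b * sphWeight c), dist_nonneg (x := b) (y := c)]

lemma sphDist_triangle_infty (a c : ℂ) : sphDist a c ≤ sphDist a ∞ + sphDist ∞ c := by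
  have ha := sphWeight_pos a; have hc := sphWeight_pos c
  simp only [sphDist_coe_coe, sphDist_coe_infty, sphDist_infty_coe]
  rw [div_add_div _ _ ha.ne' hc.ne', div_le_div_iff₀ (by positivity) (by positivity)]
  have key : dist a c ≤ sphWeight a + sphWeight c := by
    rw [dist_eq_norm]
    linarith [norm_sub_le a c, norm_le_sphWeight a, norm_le_sphWeight c]
  nlinarith [mul_le_mul_of_nonneg_left key
    (by positivity : (0 : ℝ) ≤ 2 * sphWeight a * sphWeight c)]

lemma sphDist_coe_triangle (a b c : ℂ) : sphDist a c ≤ sphDist a b + sphDist b c := by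
  have ha := sphWeight_pos a; have hb := sphWeight_pos b; have hc := sphWeight_pos c
  simp only [sphDist_coe_coe]
  rw [div_add_div _ _ (by positivity) (by positivity),
    div_le_div_iff₀ (by positivity) (by positivity)]
  nlinarith [mul_le_mul_of_nonneg_left (dist_mul_sphWeight_le a b c)
    (by positivity : (0 : ℝ) ≤ 2 * sphWeight a * sphWeight b * sphWeight c),
    dist_nonneg (x := a) (y := b), dist_nonneg (x := b) (y := c), dist_nonneg (x := a) (y := c)]

lemma sphDist_triangle (x y z : OnePoint ℂ) : sphDist x z ≤ sphDist x y + sphDist y z := by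
  induction x using OnePoint.rec <;> induction y using OnePoint.rec <;>
    induction z using OnePoint.rec
  · simp
  · simp
  · exact sphDist_infty_infty ▸ add_nonneg (sphDist_nonneg _ _) (sphDist_nonneg _ _)
  · exact sphDist_infty_triangle _ _
  · simp
  · exact sphDist_triangle_infty _ _
  · rename_i a b
    rw [sphDist_comm (a : OnePoint ℂ) ∞, sphDist_comm (b : OnePoint ℂ) ∞,
      sphDist_comm (a : OnePoint ℂ), add_comm]
    exact sphDist_infty_triangle b a
  · exact sphDist_coe_triangle _ _ _

/-! ### Inversion -/

@[simp] lemma finPart_coe (z : ℂ) : finPart z = z := rfl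
@[simp] lemma finPart_infty : finPart ∞ = 0 := rfl
@[simp] lemma oinv_infty : oinv ∞ = (0 : ℂ) := rfl
@[simp] lemma oinv_coe_zero : oinv (0 : ℂ) = ∞ := if_pos rfl
@[simp] lemma oinv_coe {z : ℂ} (hz : z ≠ 0) : oinv z = (z⁻¹ : ℂ) := if_neg hz

lemma coe_finPart {x : OnePoint ℂ} (hx : x ≠ ∞) : (finPart x : OnePoint ℂ) = x := by
  induction x using OnePoint.rec
  · exact absurd rfl hx
  · rfl

lemma finPart_ne_zero {x : OnePoint ℂ} (h0 : x ≠ (0 : ℂ)) (hinf : x ≠ ∞) : finPart x ≠ 0 :=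
  fun h => h0 (by rw [← coe_finPart hinf, h])

lemma oinv_oinv (x : OnePoint ℂ) : oinv (oinv x) = x := by
  induction x using OnePoint.rec
  · simp
  · rename_i z
    by_cases hz : z = 0 <;> simp [hz]

lemma finPart_oinv (x : OnePoint ℂ) : finPart (oinv x) = (finPart x)⁻¹ := by
  induction x using OnePoint.rec
  · simp
  · rename_i z
    by_cases hz : z = 0 <;> simp [hz]

lemma oinv_eq_infty_iff {x : OnePoint ℂ} : oinv x = ∞ ↔ x = (0 : ℂ) := by
  induction x using OnePoint.rec
  · simp
  · rename_i z
    by_cases hz : z = 0 <;> simp [hz]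

lemma oinv_eq_zero_iff {x : OnePoint ℂ} : oinv x = (0 : ℂ) ↔ x = ∞ := by
  rw [← oinv_eq_infty_iff, oinv_oinv]

lemma sphDist_oinv (x y : OnePoint ℂ) : sphDist (oinv x) (oinv y) = sphDist x y := by
  induction x using OnePoint.rec <;> induction y using OnePoint.rec
  · simp
  · rename_i w
    by_cases hw : w = 0 <;> simp [hw, sphWeight_inv, dist_eq_norm, field]
  · rename_i z
    by_cases hz : z = 0 <;> simp [hz, sphWeight_inv, dist_eq_norm, field]
  · rename_i z w
    by_cases hz : z = 0 <;> by_cases hw : w = 0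
    · simp [hz, hw]
    · simp [hz, hw, sphWeight_inv, dist_eq_norm, field]
    · simp [hz, hw, sphWeight_inv, dist_eq_norm, field]
    · have hd : dist z⁻¹ w⁻¹ = dist z w / (‖z‖ * ‖w‖) := by
        rw [dist_eq_norm, dist_eq_norm, inv_sub_inv hz hw, norm_div, norm_mul, norm_sub_rev]
      simp [hz, hw, sphWeight_inv, hd, field]

lemma sphDist_oinv_right (x y : OnePoint ℂ) : sphDist x (oinv y) = sphDist (oinv x) y := by
  rw [← sphDist_oinv, oinv_oinv]

/-! ### Chordal versus euclidean distance -/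

lemma sphDist_coe_le_two_dist (a b : ℂ) : sphDist a b ≤ 2 * dist a b := by
  rw [sphDist_coe_coe]
  exact div_le_self (by positivity) (one_le_mul_of_one_le_of_one_le (one_le_sphWeight a)
    (one_le_sphWeight b))

lemma ne_zero_of_sphDist_infty_lt {x : OnePoint ℂ} (h : sphDist x ∞ < 2) : x ≠ (0 : ℂ) := by
  rintro rfl
  simp at h

lemma sphDist_infty_lt_of_lt_norm {a : ℂ} {ε : ℝ} (hε : 0 < ε) (h : 2 / ε < ‖a‖) :
    sphDist a ∞ < ε := by
  rw [sphDist_coe_infty, div_lt_iff₀ (sphWeight_pos a)]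
  rw [div_lt_iff₀ hε] at h
  nlinarith [norm_le_sphWeight a]

lemma norm_le_of_le_sphDist_infty {a : ℂ} {m : ℝ} (hm : 0 < m) (h : m ≤ sphDist a ∞) :
    ‖a‖ ≤ 2 / m := by
  rw [sphDist_coe_infty, le_div_iff₀ (sphWeight_pos a)] at h
  exact (norm_le_sphWeight a).trans (by rw [le_div_iff₀ hm]; linarith)

lemma dist_finPart_le_of_sphDist_le {x : OnePoint ℂ} {b : ℂ} {M : ℝ} (hb : ‖b‖ ≤ M)
    (hs : sphDist x b ≤ 1 / (1 + M)) : x ≠ ∞ ∧ dist (finPart x) b ≤ (1 + M) ^ 2 * sphDist x b := by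
  have hM : 0 < 1 + M := by linarith [norm_nonneg b]
  induction x using OnePoint.rec
  · refine absurd hs (not_le.mpr ?_)
    rw [sphDist_infty_coe]
    calc 1 / (1 + M) < 2 / (1 + M) := by gcongr; norm_num
      _ ≤ 2 / sphWeight b :=
        div_le_div_of_nonneg_left zero_le_two (sphWeight_pos b)
          ((sphWeight_le_one_add_norm b).trans (by linarith))
  · rename_i a
    refine ⟨coe_ne_infty a, ?_⟩
    have hqa := sphWeight_le_one_add_norm a
    have hqb := sphWeight_le_one_add_norm b
    have hsa := sphDist_nonneg a b
    have hd : 2 * dist a b = sphDist a b * (sphWeight a * sphWeight b) := by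
      rw [sphDist_coe_coe]; field_simp [(sphWeight_pos a).ne', (sphWeight_pos b).ne']
    have hd' : 2 * dist a b ≤ sphDist a b * ((1 + ‖a‖) * (1 + M)) := by
      rw [hd]; gcongr; exacts [(sphWeight_pos b).le, hqb.trans (by linarith)]
    have hsM : sphDist a b * (1 + M) ≤ 1 := by rwa [le_div_iff₀ hM] at hs
    have hna : ‖a‖ ≤ 2 * M + 1 := by
      have : ‖a‖ ≤ ‖b‖ + dist a b := by rw [dist_eq_norm]; linarith [norm_sub_norm_le a b]
      nlinarith [norm_nonneg a]
    rw [finPart_coe]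
    nlinarith [mul_le_mul_of_nonneg_left (show 1 + ‖a‖ ≤ 2 * (1 + M) by linarith)
      (mul_nonneg hsa hM.le)]

lemma eq_of_forall_eventually_sphDist_lt {x : ℕ → OnePoint ℂ} {y y' : OnePoint ℂ}
    (hy : ∀ ε > (0 : ℝ), ∀ᶠ k in atTop, sphDist (x k) y < ε)
    (hy' : ∀ ε > (0 : ℝ), ∀ᶠ k in atTop, sphDist (x k) y' < ε) : y = y' := by
  refine eq_of_sphDist_le_zero (le_of_forall_pos_lt_add fun ε hε => ?_)
  obtain ⟨k, hk, hk'⟩ := ((hy (ε / 2) (half_pos hε)).and (hy' (ε / 2) (half_pos hε))).exists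
  linarith [sphDist_triangle y (x k) y', sphDist_comm y (x k)]

/-! ### Spherical limits of holomorphic functions -/

def SphTendstoLocallyUniformlyOn (F : ℕ → ℂ → OnePoint ℂ) (g : ℂ → OnePoint ℂ) (U : Set ℂ) :
    Prop :=
  ∀ K ⊆ U, IsCompact K → ∀ ε > (0 : ℝ), ∀ᶠ n in atTop, ∀ z ∈ K, sphDist (F n z) (g z) < ε

def EventuallyHolomorphicOn (F : ℕ → ℂ → OnePoint ℂ) (U : Set ℂ) : Prop :=
  ∀ K ⊆ U, IsCompact K → ∀ᶠ n in atTop, ∀ z ∈ K,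
    F n z ≠ ∞ ∧ DifferentiableAt ℂ (fun w => finPart (F n w)) z

section

variable {F : ℕ → ℂ → OnePoint ℂ} {g : ℂ → OnePoint ℂ} {U : Set ℂ}

lemma SphTendstoLocallyUniformlyOn.mono {V : Set ℂ} (hconv : SphTendstoLocallyUniformlyOn F g U)
    (hVU : V ⊆ U) : SphTendstoLocallyUniformlyOn F g V :=
  fun K hKV hK => hconv K (hKV.trans hVU) hK

lemma EventuallyHolomorphicOn.mono {V : Set ℂ} (hF : EventuallyHolomorphicOn F U) (hVU : V ⊆ U) :
    EventuallyHolomorphicOn F V :=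
  fun K hKV hK => hF K (hKV.trans hVU) hK

lemma SphTendstoLocallyUniformlyOn.comp_oinv (hconv : SphTendstoLocallyUniformlyOn F g U) :
    SphTendstoLocallyUniformlyOn (fun n z => oinv (F n z)) (fun z => oinv (g z)) U := by
  simpa only [SphTendstoLocallyUniformlyOn, sphDist_oinv] using hconv

lemma EventuallyHolomorphicOn.comp_oinv (hF : EventuallyHolomorphicOn F U)
    (h0 : ∀ K ⊆ U, IsCompact K → ∀ᶠ n in atTop, ∀ z ∈ K, F n z ≠ (0 : ℂ)) :
    EventuallyHolomorphicOn (fun n z => oinv (F n z)) U := by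
  intro K hKU hK
  filter_upwards [hF K hKU hK, h0 K hKU hK] with n hhol hne z hz
  obtain ⟨hfin, hdiff⟩ := hhol z hz
  refine ⟨mt oinv_eq_infty_iff.mp (hne z hz), ?_⟩
  simp only [finPart_oinv]
  exact hdiff.inv fun h => hne z hz (by rw [← coe_finPart hfin, h])

lemma SphTendstoLocallyUniformlyOn.eventually_sphDist_lt (hU : IsOpen U)
    (hF : EventuallyHolomorphicOn F U) (hconv : SphTendstoLocallyUniformlyOn F g U) {z₀ : ℂ}
    (hz₀ : z₀ ∈ U) {ε : ℝ} (hε : 0 < ε) : ∀ᶠ z in 𝓝 z₀, sphDist (g z) (g z₀) < ε := by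
  obtain ⟨r, hr, hrU⟩ := nhds_basis_closedBall.mem_iff.mp (hU.mem_nhds hz₀)
  obtain ⟨n, hn, hhol⟩ := ((hconv _ hrU (isCompact_closedBall z₀ r) (ε / 3) (by positivity)).and
    (hF _ hrU (isCompact_closedBall z₀ r))).exists
  have hz₀r := mem_closedBall_self (x := z₀) hr.le
  have hcont := (hhol z₀ hz₀r).2.continuousAt.eventually
    (ball_mem_nhds _ (by positivity : 0 < ε / 6))
  filter_upwards [closedBall_mem_nhds z₀ hr, hcont] with z hz hzn
  have hnear : sphDist (F n z) (F n z₀) < ε / 3 := by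
    rw [← coe_finPart (hhol z hz).1, ← coe_finPart (hhol z₀ hz₀r).1]
    linarith [sphDist_coe_le_two_dist (finPart (F n z)) (finPart (F n z₀)), mem_ball.mp hzn]
  calc sphDist (g z) (g z₀)
      ≤ sphDist (g z) (F n z) + (sphDist (F n z) (F n z₀) + sphDist (F n z₀) (g z₀)) :=
        (sphDist_triangle _ _ _).trans (add_le_add_right (sphDist_triangle _ _ _) _)
    _ < ε / 3 + (ε / 3 + ε / 3) := by
        rw [sphDist_comm (g z)]
        gcongr
        exacts [hn z hz, hn z₀ hz₀r]
    _ = ε := by ring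

lemma SphTendstoLocallyUniformlyOn.tendstoLocallyUniformlyOn_finPart (hU : IsOpen U)
    (hF : EventuallyHolomorphicOn F U) (hconv : SphTendstoLocallyUniformlyOn F g U)
    (hfin : ∀ z ∈ U, g z ≠ ∞) :
    TendstoLocallyUniformlyOn (fun n z => finPart (F n z)) (fun z => finPart (g z)) atTop U := by
  refine tendstoLocallyUniformlyOn_of_forall_exists_nhds fun z₀ hz₀ => ?_
  have hm : 0 < sphDist (g z₀) ∞ := sphDist_pos (hfin z₀ hz₀)
  set m := sphDist (g z₀) ∞
  obtain ⟨r, hr, hrU⟩ : ∃ r > 0, ∀ z ∈ closedBall z₀ r, z ∈ U ∧ sphDist (g z) (g z₀) < m / 2 :=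
    nhds_basis_closedBall.eventually_iff.mp
      (Eventually.and (hU.mem_nhds hz₀) (hconv.eventually_sphDist_lt hU hF hz₀ (half_pos hm)))
  refine ⟨closedBall z₀ r, mem_nhdsWithin_of_mem_nhds (closedBall_mem_nhds z₀ hr), ?_⟩
  set M := 2 / (m / 2)
  have hbound : ∀ z ∈ closedBall z₀ r, ‖finPart (g z)‖ ≤ M := fun z hz => by
    refine norm_le_of_le_sphDist_infty (half_pos hm) ?_
    rw [coe_finPart (hfin z (hrU z hz).1)]
    linarith [sphDist_triangle (g z₀) (g z) ∞, sphDist_comm (g z) (g z₀), (hrU z hz).2]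
  have hM : 0 < 1 + M := by positivity
  rw [Metric.tendstoUniformlyOn_iff]
  intro ε hε
  filter_upwards [hconv _ (fun z hz => (hrU z hz).1) (isCompact_closedBall z₀ r)
    (min (1 / (1 + M)) (ε / (1 + M) ^ 2)) (by positivity)] with n hn z hz
  have hs := hn z hz
  rw [← coe_finPart (hfin z (hrU z hz).1)] at hs
  obtain ⟨-, hd⟩ := dist_finPart_le_of_sphDist_le (hbound z hz) (hs.le.trans (min_le_left _ _))
  rw [dist_comm]
  calc dist (finPart (F n z)) (finPart (g z))
      ≤ (1 + M) ^ 2 * sphDist (F n z) (finPart (g z)) := hd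
    _ < (1 + M) ^ 2 * (ε / (1 + M) ^ 2) := by gcongr; exact hs.trans_le (min_le_right _ _)
    _ = ε := by field_simp

lemma SphTendstoLocallyUniformlyOn.differentiableOn_finPart (hU : IsOpen U)
    (hF : EventuallyHolomorphicOn F U) (hconv : SphTendstoLocallyUniformlyOn F g U)
    (hfin : ∀ z ∈ U, g z ≠ ∞) : DifferentiableOn ℂ (fun z => finPart (g z)) U := by
  intro z₀ hz₀
  obtain ⟨r, hr, hrU⟩ := nhds_basis_closedBall.mem_iff.mp (hU.mem_nhds hz₀)
  have hdiff : ∀ᶠ n in atTop, DifferentiableOn ℂ (fun z => finPart (F n z)) (ball z₀ r) := by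
    filter_upwards [hF _ hrU (isCompact_closedBall z₀ r)] with n hn z hz
    exact (hn z (ball_subset_closedBall hz)).2.differentiableWithinAt
  have hball := ((hconv.tendstoLocallyUniformlyOn_finPart hU hF hfin).mono
    (ball_subset_closedBall.trans hrU)).differentiableOn hdiff isOpen_ball
  exact (hball.differentiableAt (ball_mem_nhds z₀ hr)).differentiableWithinAt

/-- Minimum modulus principle, from the maximum principle for `1 / F`. -/
lemma le_norm_of_forall_mem_sphere_le_norm {F : ℂ → ℂ} {c : ℂ} {ρ a : ℝ} (hρ : 0 < ρ)
    (ha : 0 < a) (hF : ∀ z ∈ closedBall c ρ, DifferentiableAt ℂ F z ∧ F z ≠ 0)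
    (hsph : ∀ z ∈ sphere c ρ, a ≤ ‖F z‖) : a ≤ ‖F c‖ := by
  have hfront : ∀ z ∈ frontier (ball c ρ), ‖(F z)⁻¹‖ ≤ a⁻¹ := by
    rw [frontier_ball c hρ.ne']
    intro z hz
    rw [norm_inv]
    exact inv_anti₀ ha (hsph z hz)
  have hdcc : DiffContOnCl ℂ (fun z => (F z)⁻¹) (ball c ρ) := by
    refine DifferentiableOn.diffContOnCl fun z hz => ?_
    rw [closure_ball c hρ.ne'] at hz
    exact ((hF z hz).1.inv (hF z hz).2).differentiableWithinAt
  have hmax := Complex.norm_le_of_forall_mem_frontier_norm_le isBounded_ball hdcc hfront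
    (subset_closure (mem_ball_self hρ))
  rwa [norm_inv, inv_le_inv₀ (norm_pos_iff.mpr (hF c (mem_closedBall_self hρ.le)).2) ha] at hmax

/-- Hurwitz's theorem, for zero-free approximants. -/
theorem eventually_eq_zero_of_tendstoLocallyUniformlyOn_of_ne_zero {F : ℕ → ℂ → ℂ} {f : ℂ → ℂ}
    {c : ℂ} (hU : IsOpen U) (hc : c ∈ U) (hconv : TendstoLocallyUniformlyOn F f atTop U)
    (hF : ∀ K ⊆ U, IsCompact K → ∀ᶠ n in atTop, ∀ z ∈ K, DifferentiableAt ℂ (F n) z ∧ F n z ≠ 0)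
    (hf : DifferentiableOn ℂ f U) (hfc : f c = 0) : ∀ᶠ z in 𝓝 c, f z = 0 := by
  refine ((hf.analyticAt (hU.mem_nhds hc)).eventually_eq_zero_or_eventually_ne_zero).resolve_right
    fun hiso => ?_
  obtain ⟨ρ, hρ, hρU⟩ : ∃ ρ > 0, ∀ z ∈ closedBall c ρ, z ∈ U ∧ (z ≠ c → f z ≠ 0) :=
    nhds_basis_closedBall.eventually_iff.mp
      (Eventually.and (hU.mem_nhds hc) (eventually_nhdsWithin_iff.mp hiso))
  have hsub : closedBall c ρ ⊆ U := fun z hz => (hρU z hz).1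
  obtain ⟨zm, hzm, hmin⟩ := (isCompact_sphere c ρ).exists_isMinOn
    (NormedSpace.sphere_nonempty.mpr hρ.le)
    ((hf.continuousOn.mono (sphere_subset_closedBall.trans hsub)).norm)
  set δ := ‖f zm‖
  have hδ : 0 < δ := norm_pos_iff.mpr <| (hρU zm (sphere_subset_closedBall hzm)).2 fun h => by
    rw [h, mem_sphere, dist_self] at hzm; exact hρ.ne hzm
  have hunif := Metric.tendstoUniformlyOn_iff.mp
    ((tendstoLocallyUniformlyOn_iff_forall_isCompact hU).mp hconv _ hsub (isCompact_closedBall c ρ))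
  obtain ⟨n, hn, hFn⟩ := ((hunif (δ / 2) (half_pos hδ)).and
    (hF _ hsub (isCompact_closedBall c ρ))).exists
  have hsph : ∀ z ∈ sphere c ρ, δ / 2 ≤ ‖F n z‖ := fun z hz => by
    have hδz : δ ≤ ‖f z‖ := hmin hz
    have hclose : ‖f z - F n z‖ < δ / 2 := by
      rw [← dist_eq_norm]; exact hn z (sphere_subset_closedBall hz)
    linarith [norm_sub_norm_le (f z) (F n z)]
  have hcenter : ‖F n c‖ < δ / 2 := by
    simpa [hfc] using hn c (mem_closedBall_self hρ.le)
  exact hcenter.not_ge (le_norm_of_forall_mem_sphere_le_norm hρ (half_pos hδ) hFn hsph)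

lemma SphTendstoLocallyUniformlyOn.eventually_eq_infty (hU : IsOpen U)
    (hF : EventuallyHolomorphicOn F U) (hconv : SphTendstoLocallyUniformlyOn F g U) {c : ℂ}
    (hc : c ∈ U) (hgc : g c = ∞) : ∀ᶠ z in 𝓝 c, g z = ∞ := by
  obtain ⟨r, hr, hrU⟩ : ∃ r > 0, ∀ z ∈ ball c r, z ∈ U ∧ sphDist (g z) ∞ < 1 / 2 := by
    have hnear := hconv.eventually_sphDist_lt hU hF hc one_half_pos
    rw [hgc] at hnear
    exact Metric.eventually_nhds_iff_ball.mp (Eventually.and (hU.mem_nhds hc) hnear)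
  have hVU : ball c r ⊆ U := fun z hz => (hrU z hz).1
  have hF0 : ∀ K ⊆ ball c r, IsCompact K → ∀ᶠ n in atTop, ∀ z ∈ K, F n z ≠ (0 : ℂ) := by
    intro K hKV hK
    filter_upwards [hconv K (hKV.trans hVU) hK (1 / 2) one_half_pos] with n hn z hz
    refine ne_zero_of_sphDist_infty_lt ?_
    linarith [sphDist_triangle (F n z) (g z) ∞, hn z hz, (hrU z (hKV hz)).2]
  -- `1 / F n` is holomorphic near `c` and tends to `1 / g`, which vanishes at `c`.
  have hFinv := (hF.mono hVU).comp_oinv hF0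
  have hconvinv := (hconv.mono hVU).comp_oinv
  have hfin : ∀ z ∈ ball c r, oinv (g z) ≠ ∞ := fun z hz =>
    mt oinv_eq_infty_iff.mp (ne_zero_of_sphDist_infty_lt (by linarith [(hrU z hz).2]))
  have hne : ∀ K ⊆ ball c r, IsCompact K → ∀ᶠ n in atTop, ∀ z ∈ K,
      DifferentiableAt ℂ (fun w => finPart (oinv (F n w))) z ∧ finPart (oinv (F n z)) ≠ 0 := by
    intro K hKV hK
    filter_upwards [hFinv K hKV hK, hF K (hKV.trans hVU) hK] with n hinv hn z hz
    exact ⟨(hinv z hz).2, finPart_ne_zero (mt oinv_eq_zero_iff.mp (hn z hz).1) (hinv z hz).1⟩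
  have hzero := eventually_eq_zero_of_tendstoLocallyUniformlyOn_of_ne_zero isOpen_ball
    (mem_ball_self hr) (hconvinv.tendstoLocallyUniformlyOn_finPart isOpen_ball hFinv hfin) hne
    (hconvinv.differentiableOn_finPart isOpen_ball hFinv hfin) (by simp [hgc])
  filter_upwards [hzero, ball_mem_nhds c hr] with z hz hzV
  rw [← oinv_eq_zero_iff, ← coe_finPart (hfin z hzV), hz]

lemma SphTendstoLocallyUniformlyOn.eq_infty (hF : EventuallyHolomorphicOn F Set.univ)
    (hconv : SphTendstoLocallyUniformlyOn F g Set.univ) {c : ℂ} (hgc : g c = ∞) (z : ℂ) :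
    g z = ∞ := by
  have hclopen : IsClopen {z | g z = ∞} := by
    refine ⟨isOpen_compl_iff.mp (isOpen_iff_mem_nhds.mpr fun z₀ hz₀ => ?_),
      isOpen_iff_mem_nhds.mpr fun z₀ hz₀ =>
        hconv.eventually_eq_infty isOpen_univ hF (Set.mem_univ z₀) hz₀⟩
    filter_upwards [hconv.eventually_sphDist_lt isOpen_univ hF (Set.mem_univ z₀) (sphDist_pos hz₀)]
      with z hz hzinf
    rw [show g z = ∞ from hzinf, sphDist_comm] at hz
    exact lt_irrefl _ hz
  exact Set.eq_univ_iff_forall.mp (hclopen.eq_univ ⟨c, hgc⟩) z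

end

/-! ### Yosida functions -/

section

variable {f g : ℂ → OnePoint ℂ}

lemma UnifCompLim.sphTendstoLocallyUniformlyOn {h : ℕ → ℂ} (hg : UnifCompLim f h g) :
    SphTendstoLocallyUniformlyOn (fun n z => f (z + h n)) g Set.univ :=
  fun K _ hK ε hε => eventually_atTop.mpr (hg K hK ε hε)

lemma MeroSphere.differentiableAt_finPart (hf : MeroSphere f) {z : ℂ} (hz : f z ≠ ∞) :
    DifferentiableAt ℂ (fun w => finPart (f w)) z :=
  ((hf z).resolve_right fun h => hz h.1).2.differentiableAt

lemma MeroSphere.comp_oinv (hf : MeroSphere f) : MeroSphere (fun z => oinv (f z)) := by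
  intro z
  rcases hf z with ⟨hne, hana⟩ | ⟨heq, hana⟩
  · by_cases h0 : f z = (0 : ℂ)
    · exact Or.inr ⟨by simp [h0], by simpa only [oinv_oinv] using hana⟩
    · refine Or.inl ⟨mt oinv_eq_infty_iff.mp h0, ?_⟩
      simp only [finPart_oinv]
      exact hana.inv (finPart_ne_zero h0 hne)
  · exact Or.inl ⟨by simp [heq], hana⟩

lemma YosidaN1.comp_oinv (hf : YosidaN1 f) : YosidaN1 (fun z => oinv (f z)) := by
  obtain ⟨hmero, hnormal, hnonconst⟩ := hf
  refine ⟨hmero.comp_oinv, fun h => ?_, fun h g hg ⟨c, hc⟩ => ?_⟩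
  · obtain ⟨φ, hφ, g, hg⟩ := hnormal h
    exact ⟨φ, hφ, fun z => oinv (g z), by simpa only [UnifCompLim, sphDist_oinv] using hg⟩
  · refine hnonconst h (fun z => oinv (g z)) ?_ ⟨oinv c, by rw [hc]⟩
    simpa only [UnifCompLim, sphDist_oinv_right] using hg

lemma MeroSphere.eventuallyHolomorphicOn_translates (hf : MeroSphere f) {w : ℕ → ℂ}
    (hw : ∀ K : Set ℂ, IsCompact K → ∀ᶠ n in atTop, ∀ z ∈ K, f (z + w n) ≠ ∞) :
    EventuallyHolomorphicOn (fun n z => f (z + w n)) Set.univ := fun K _ hK => by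
  filter_upwards [hw K hK] with n hn z hz
  exact ⟨hn z hz, (hf.differentiableAt_finPart (hn z hz)).comp z (differentiableAt_id.add_const _)⟩

lemma YosidaN1.ne_infty_of_unifCompLim (hf : YosidaN1 f) {w : ℕ → ℂ} (hg : UnifCompLim f w g)
    {F : ℕ → ℂ → OnePoint ℂ} (hF : EventuallyHolomorphicOn F Set.univ)
    (hconv : SphTendstoLocallyUniformlyOn F g Set.univ) (z : ℂ) : g z ≠ ∞ :=
  fun hz => hf.2.2 w g hg ⟨∞, funext (hconv.eq_infty hF hz)⟩

lemma exists_lt_norm_finPart (hg : Differentiable ℂ (fun z => finPart (g z)))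
    (hfin : ∀ z, g z ≠ ∞) (hnc : ¬∃ c, g = fun _ => c) (C : ℝ) : ∃ t, C < ‖finPart (g t)‖ := by
  by_contra! hbdd
  obtain ⟨c, hc⟩ := hg.exists_eq_const_of_bounded
    (isBounded_iff_forall_norm_le.mpr ⟨C, by rintro _ ⟨t, rfl⟩; exact hbdd t⟩)
  exact hnc ⟨c, funext fun z => by
    rw [← coe_finPart (hfin z), congrFun hc z, Function.const_apply]⟩

/-- A diagonal argument. -/
lemma exists_unifCompLim_of_translates_of_unifCompLim {w : ℕ → ℂ}
    (hnormal : ∀ h : ℕ → ℂ, ∃ φ : ℕ → ℕ, StrictMono φ ∧ ∃ g, UnifCompLim f (h ∘ φ) g)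
    (hg : UnifCompLim f w g) (t : ℕ → ℂ) :
    ∃ s : ℕ → ℂ, ∃ ψ : ℕ → ℕ, StrictMono ψ ∧ ∃ g₂, UnifCompLim f (s ∘ ψ) g₂ ∧
      SphTendstoLocallyUniformlyOn (fun k z => g (z + t (ψ k))) g₂ Set.univ := by
  have hdiag : ∀ k : ℕ, ∃ s : ℂ, ∀ z ∈ closedBall (0 : ℂ) k,
      sphDist (f (z + s)) (g (z + t k)) < 1 / (k + 1) := by
    intro k
    obtain ⟨N, hN⟩ := hg (closedBall (t k) k) (isCompact_closedBall _ _) (1 / (k + 1))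
      (by positivity)
    refine ⟨t k + w N, fun z hz => ?_⟩
    rw [← add_assoc]
    exact hN N le_rfl _ (by simpa [dist_eq_norm] using hz)
  choose s hs using hdiag
  obtain ⟨ψ, hψ, g₂, hg₂⟩ := hnormal s
  refine ⟨s, ψ, hψ, g₂, hg₂, fun K _ hK ε hε => ?_⟩
  obtain ⟨R, hR⟩ := hK.isBounded.subset_closedBall 0
  filter_upwards [(tendsto_natCast_atTop_atTop.comp hψ.tendsto_atTop).eventually_ge_atTop R,
    (tendsto_one_div_add_atTop_nhds_zero_nat.comp hψ.tendsto_atTop).eventually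
      (gt_mem_nhds (half_pos hε)),
    eventually_atTop.mpr (hg₂ K hK (ε / 2) (half_pos hε))] with k hkR hkε hk z hz
  calc sphDist (g (z + t (ψ k))) (g₂ z)
      ≤ sphDist (f (z + s (ψ k))) (g (z + t (ψ k))) + sphDist (f (z + s (ψ k))) (g₂ z) := by
        rw [sphDist_comm (f _)]; exact sphDist_triangle _ _ _
    _ < ε / 2 + ε / 2 := by
        gcongr
        · exact (hs (ψ k) z (closedBall_subset_closedBall hkR (hR hz))).trans hkε
        · exact hk z hz
    _ = ε := add_halves ε

theorem YosidaN1.exists_pole_mem_ball (hf : YosidaN1 f) :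
    ∃ R > (0 : ℝ), ∀ w : ℂ, ∃ z ∈ ball w R, f z = ∞ := by
  by_contra! hfree
  choose w hw using fun n : ℕ => hfree ((n : ℝ) + 1) (by positivity)
  obtain ⟨φ, hφ, g, hg⟩ := hf.2.1 w
  have hhol : EventuallyHolomorphicOn (fun n z => f (z + (w ∘ φ) n)) Set.univ := by
    refine hf.1.eventuallyHolomorphicOn_translates fun K hK => ?_
    obtain ⟨R, hR⟩ := hK.isBounded.subset_closedBall 0
    filter_upwards [(tendsto_natCast_atTop_atTop.comp hφ.tendsto_atTop).eventually_ge_atTop R]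
      with n hn z hz
    refine hw (φ n) _ ?_
    rw [mem_ball, dist_eq_norm, Function.comp_apply, add_sub_cancel_right]
    linarith [mem_closedBall_zero_iff.mp (hR hz), show R ≤ (φ n : ℝ) from hn]
  have hconv := hg.sphTendstoLocallyUniformlyOn
  have hfin := hf.ne_infty_of_unifCompLim hg hhol hconv
  have hG : Differentiable ℂ (fun z => finPart (g z)) := differentiableOn_univ.mp
    (hconv.differentiableOn_finPart isOpen_univ hhol fun z _ => hfin z)
  choose t ht using fun k : ℕ => exists_lt_norm_finPart hG hfin (hf.2.2 _ g hg) k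
  -- Translating `g` to the points `t k`, where it is large, gives a limit which is `∞` at `0`.
  obtain ⟨s, ψ, hψ, g₂, hg₂, hconv₂⟩ := exists_unifCompLim_of_translates_of_unifCompLim hf.2.1 hg t
  have hhol₂ : EventuallyHolomorphicOn (fun k z => g (z + t (ψ k))) Set.univ :=
    fun _ _ _ => Eventually.of_forall fun k z _ =>
      ⟨hfin _, (hG _).comp z (differentiableAt_id.add_const _)⟩
  refine hf.ne_infty_of_unifCompLim hg₂ hhol₂ hconv₂ 0 <|
    eq_of_forall_eventually_sphDist_lt (x := fun k => g (0 + t (ψ k)))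
      (fun ε hε => (hconv₂ {0} (Set.subset_univ _) isCompact_singleton ε hε).mono
        fun k hk => hk 0 rfl) fun ε hε => ?_
  filter_upwards [(tendsto_natCast_atTop_atTop.comp hψ.tendsto_atTop).eventually_gt_atTop
    (2 / ε)] with k hk
  rw [zero_add, ← coe_finPart (hfin _)]
  exact sphDist_infty_lt_of_lt_norm hε (hk.trans (ht (ψ k)))

end

/-- For any function f of Yosida's class N1 there is a radius R0 such that every disc of
radius R0 contains a zero of f and a pole of f. -/
theorem stmt11 (f : ℂ → OnePoint ℂ) (hf : YosidaN1 f) :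
    ∃ R₀ > (0 : ℝ), ∀ w : ℂ,
      (∃ z ∈ Metric.ball w R₀, f z = ((0 : ℂ) : OnePoint ℂ)) ∧
      (∃ z ∈ Metric.ball w R₀, f z = (∞ : OnePoint ℂ)) := by
  obtain ⟨R₁, hR₁, hpole⟩ := hf.exists_pole_mem_ball
  obtain ⟨R₂, -, hzero⟩ := hf.comp_oinv.exists_pole_mem_ball
  refine ⟨max R₁ R₂, lt_max_of_lt_left hR₁, fun w => ⟨?_, ?_⟩⟩
  · obtain ⟨z, hz, h⟩ := hzero w
    exact ⟨z, ball_subset_ball (le_max_right _ _) hz, oinv_eq_infty_iff.mp h⟩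
  · obtain ⟨z, hz, h⟩ := hpole w
    exact ⟨z, ball_subset_ball (le_max_left _ _) hz, h⟩
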